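/- Let x^k ∈ ℝ^{V×d} evolve as x^{k+1} = W_k x^k − γ g^k where each W_k satisfies the ergodic mixing property ‖W^{(m:k)} z − z̄‖² ≤ 2(1−ρ̄)^{2(k−m)} ‖z − z̄‖² for all z, W_k 𝟙 = 𝟙, and each row g^k_v of g^k satisfies ‖g^k_v‖ ≤ B with g^k_v = 0 except for v in a set I_k ⊆ V. If x^0 has all rows equal, then ∑_{k<K} ‖x^k − x̄^k‖² ≤ (2γ²B²/ρ̄²) ∑_{k<K} |I_k|. -/

import Mathlib

/-!
Unrolling the recursion, `x^k − x̄^k = −γ ∑_{m<k} (W^{(m+1:k)} g^m − mean)`: the consensus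
initial point is fixed by the row-stochastic products and killed by centring. The mixing property,
applied coordinatewise, bounds the squared Frobenius norm of the `m`-th summand by
`2 (1−ρ̄)^{2(k−1−m)} B² |I_m|`. The triangle inequality followed by Cauchy–Schwarz with weights
`(1−ρ̄)^{k−1−m}` gives `‖x^k − x̄^k‖² ≤ (2γ²B²/ρ̄) ∑_{m<k} (1−ρ̄)^{k−1−m} |I_m|`, and summing this
geometric convolution over `k` costs another factor `1/ρ̄`.
-/

open Finset

/-- Squared distance to consensus of a vector `x ∈ ℝ^V`. -/
noncomputable def consensusDist2 {V : Type*} [Fintype V] (x : V → ℝ) : ℝ :=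
  ∑ v, (x v - (Fintype.card V : ℝ)⁻¹ * ∑ w, x w) ^ 2

lemma consensusDist2_le_sum_sq {V : Type*} [Fintype V] (z : V → ℝ) :
    consensusDist2 z ≤ ∑ v, z v ^ 2 := by
  set n : ℝ := (Fintype.card V : ℝ)
  set c := n⁻¹ * ∑ w, z w
  have hmean : ∑ w, z w = n * c := by
    rcases isEmpty_or_nonempty V with hV | hV
    · simp [c]
    · rw [← mul_assoc, mul_inv_cancel₀ (by positivity), one_mul]
  have hexpand : consensusDist2 z = ∑ v, z v ^ 2 - n * c ^ 2 := by
    change ∑ v, (z v - c) ^ 2 = _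
    simp only [sub_sq, sum_add_distrib, sum_sub_distrib, ← sum_mul, ← mul_sum, sum_const,
      card_univ, nsmul_eq_mul, hmean]
    ring
  rw [hexpand, sub_le_self_iff]
  positivity

lemma sum_range_geom_le {q : ℝ} (hq0 : 0 ≤ q) (hq1 : q < 1) (n : ℕ) :
    ∑ j ∈ range n, q ^ j ≤ (1 - q)⁻¹ := by
  have h := geom_sum_Ico_le_of_lt_one (m := 0) (n := n) hq0 hq1
  rwa [← range_eq_Ico, pow_zero, one_div] at h

lemma sum_range_sum_range_geom_mul_le {q : ℝ} (hq0 : 0 ≤ q) (hq1 : q < 1) {c : ℕ → ℝ}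
    (hc : ∀ m, 0 ≤ c m) (K : ℕ) :
    ∑ k ∈ range K, ∑ m ∈ range k, q ^ (k - 1 - m) * c m ≤ (1 - q)⁻¹ * ∑ m ∈ range K, c m := by
  have hswap : ∑ k ∈ range K, ∑ m ∈ range k, q ^ (k - 1 - m) * c m
      = ∑ m ∈ range K, (∑ j ∈ range (K - (m + 1)), q ^ j) * c m := by
    rw [sum_comm' (t' := range K) (s' := fun m => Ico (m + 1) K) 
      (h := by simp only [mem_range, mem_Ico]; omega)]
    refine sum_congr rfl fun m _ => ?_
    rw [sum_mul, sum_Ico_eq_sum_range]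
    exact sum_congr rfl fun j _ => by congr 2; omega
  rw [hswap, mul_sum]
  exact sum_le_sum fun m _ => mul_le_mul_of_nonneg_right (sum_range_geom_le hq0 hq1 _) (hc m)

lemma norm_sum_sq_le_of_norm_sq_le {ι F : Type*} [SeminormedAddCommGroup F] (s : Finset ι)
    (a : ι → F) {w c : ι → ℝ} (hw : ∀ i ∈ s, 0 ≤ w i) (hc : ∀ i ∈ s, 0 ≤ c i)
    (ha : ∀ i ∈ s, ‖a i‖ ^ 2 ≤ w i ^ 2 * c i) :
    ‖∑ i ∈ s, a i‖ ^ 2 ≤ (∑ i ∈ s, w i) * ∑ i ∈ s, w i * c i := by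
  have hterm : ∀ i ∈ s, ‖a i‖ ≤ w i * √(c i) := fun i hi => by
    rw [← Real.sqrt_sq (hw i hi), ← Real.sqrt_mul (sq_nonneg _)]
    exact Real.le_sqrt_of_sq_le (ha i hi)
  calc ‖∑ i ∈ s, a i‖ ^ 2 ≤ (∑ i ∈ s, w i * √(c i)) ^ 2 := by
        gcongr
        exact (norm_sum_le s a).trans (sum_le_sum hterm)
    _ ≤ (∑ i ∈ s, w i) * ∑ i ∈ s, w i * c i := by
        refine sum_sq_le_sum_mul_sum_of_sq_le_mul s hw (fun i hi => mul_nonneg (hw i hi) (hc i hi))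
          fun i hi => le_of_eq ?_
        rw [mul_pow, Real.sq_sqrt (hc i hi)]
        ring

lemma sum_norm_sq_le_of_support {V E : Type*} [Fintype V] [SeminormedAddCommGroup E] {f : V → E}
    {s : Finset V} {B : ℝ} (hf : ∀ v ∉ s, f v = 0) (hB : ∀ v, ‖f v‖ ≤ B) :
    ∑ v, ‖f v‖ ^ 2 ≤ B ^ 2 * s.card := by
  rw [← sum_subset (subset_univ s) fun v _ hv => by rw [hf v hv, norm_zero, sq, mul_zero]]
  calc ∑ v ∈ s, ‖f v‖ ^ 2 ≤ ∑ _v ∈ s, B ^ 2 := sum_le_sum fun v _ => by gcongr; exact hB v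
    _ = B ^ 2 * s.card := by rw [sum_const, nsmul_eq_mul, mul_comm]

lemma sum_norm_sum_range_sq_le_of_geom {V E : Type*} [Fintype V] [SeminormedAddCommGroup E]
    {q : ℝ} (hq0 : 0 ≤ q) (hq1 : q < 1) {c : ℕ → ℝ} (hc : ∀ m, 0 ≤ c m) {k : ℕ}
    (a : ℕ → V → E) (ha : ∀ m < k, ∑ v, ‖a m v‖ ^ 2 ≤ (q ^ (k - 1 - m)) ^ 2 * c m) :
    ∑ v, ‖∑ m ∈ range k, a m v‖ ^ 2 ≤ (1 - q)⁻¹ * ∑ m ∈ range k, q ^ (k - 1 - m) * c m := by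
  -- `WithLp.toLp 2` equips `V → E` with the Frobenius norm.
  have hnorm (f : V → E) : ‖WithLp.toLp 2 f‖ ^ 2 = ∑ v, ‖f v‖ ^ 2 := PiLp.norm_sq_eq_of_L2 _ _
  have hweights : ∑ m ∈ range k, q ^ (k - 1 - m) ≤ (1 - q)⁻¹ := by
    rw [sum_range_reflect (fun j => q ^ j) k]
    exact sum_range_geom_le hq0 hq1 k
  calc ∑ v, ‖∑ m ∈ range k, a m v‖ ^ 2 = ‖∑ m ∈ range k, WithLp.toLp 2 (a m)‖ ^ 2 := by
        rw [← WithLp.toLp_sum, hnorm]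
        simp only [Finset.sum_apply]
    _ ≤ (∑ m ∈ range k, q ^ (k - 1 - m)) * ∑ m ∈ range k, q ^ (k - 1 - m) * c m := by
        refine norm_sum_sq_le_of_norm_sq_le _ _ (fun m _ => pow_nonneg hq0 _) (fun m _ => hc m)
          fun m hm => ?_
        rw [hnorm]
        exact ha m (mem_range.mp hm)
    _ ≤ (1 - q)⁻¹ * ∑ m ∈ range k, q ^ (k - 1 - m) * c m := by
        gcongr
        exact sum_nonneg fun m _ => mul_nonneg (pow_nonneg hq0 _) (hc m)

open scoped Matrix

section Mixing

variable {V E : Type*} [Fintype V] [AddCommGroup E] [Module ℝ E]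

/- For `x ∈ ℝ^{V×d}` stored row by row as `x : V → E`, `mixing M x` is the paper's `M x` and
`consensusDev x` is `x − x̄`. -/

@[simps]
def mixing (M : Matrix V V ℝ) : (V → E) →ₗ[ℝ] (V → E) where
  toFun f v := ∑ w, M v w • f w
  map_add' f g := by ext v; simp only [Pi.add_apply, smul_add, sum_add_distrib]
  map_smul' c f := by ext v; simp only [Pi.smul_apply, smul_comm c, smul_sum, RingHom.id_apply]

@[simp]
lemma mixing_one [DecidableEq V] (f : V → E) : mixing 1 f = f := by
  ext v
  simp [Matrix.one_apply, ite_smul]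

lemma mixing_mul (A B : Matrix V V ℝ) (f : V → E) : mixing (A * B) f = mixing A (mixing B f) := by
  ext v
  simp only [mixing_apply, Matrix.mul_apply, sum_smul, smul_sum, smul_smul]
  exact sum_comm

lemma mixing_of_forall_eq {M : Matrix V V ℝ} (hM : M *ᵥ 1 = 1) {f : V → E}
    (hf : ∀ v w, f v = f w) : mixing M f = f := by
  ext v
  have hrow : ∑ w, M v w = 1 := by simpa [Matrix.mulVec, dotProduct] using congrFun hM v
  simp only [mixing_apply, hf _ v, ← sum_smul, hrow, one_smul]

@[simps]
noncomputable def consensusDev : (V → E) →ₗ[ℝ] (V → E) where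
  toFun f v := f v - (Fintype.card V : ℝ)⁻¹ • ∑ w, f w
  map_add' f g := by ext v; simp only [Pi.add_apply, sum_add_distrib, smul_add]; abel
  map_smul' c f := by
    ext v
    simp only [Pi.smul_apply, ← smul_sum, smul_comm c, smul_sub, RingHom.id_apply]

lemma consensusDev_of_forall_eq {f : V → E} (hf : ∀ v w, f v = f w) : consensusDev f = 0 := by
  ext v
  have hn : (Fintype.card V : ℝ) ≠ 0 := by
    have : Nonempty V := ⟨v⟩
    positivity
  simp only [consensusDev_apply, hf _ v, sum_const, card_univ, ← Nat.cast_smul_eq_nsmul ℝ,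
    smul_smul, inv_mul_cancel₀ hn, one_smul, sub_self, Pi.zero_apply]

end Mixing

lemma mulVec_one_of_eq_mul_succ {V : Type*} [Fintype V] [DecidableEq V] {W : ℕ → Matrix V V ℝ}
    {P : ℕ → ℕ → Matrix V V ℝ} (hP0 : ∀ m, P m m = 1) (hPs : ∀ m k, P m (k + 1) = W k * P m k)
    (hW : ∀ k, W k *ᵥ 1 = 1) {m k : ℕ} (hmk : m ≤ k) : P m k *ᵥ 1 = 1 := by
  induction k, hmk using Nat.le_induction with
  | base => simp [hP0]
  | succ k _ ih => rw [hPs, ← Matrix.mulVec_mulVec, ih, hW]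

lemma mixing_apply_apply {V ι : Type*} [Fintype V] (M : Matrix V V ℝ)
    (f : V → EuclideanSpace ℝ ι) (v : V) (i : ι) :
    mixing M f v i = (M *ᵥ fun w => f w i) v := by
  simp [Matrix.mulVec, dotProduct]

section Euclidean

variable {V ι : Type*} [Fintype V] [Fintype ι]

lemma sum_norm_consensusDev_sq (f : V → EuclideanSpace ℝ ι) :
    ∑ v, ‖consensusDev f v‖ ^ 2 = ∑ i, consensusDist2 fun v => f v i := by
  simp only [EuclideanSpace.real_norm_sq_eq, consensusDist2]
  rw [sum_comm]
  simp

lemma sum_norm_consensusDev_sq_le (f : V → EuclideanSpace ℝ ι) :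
    ∑ v, ‖consensusDev f v‖ ^ 2 ≤ ∑ v, ‖f v‖ ^ 2 :=
  calc ∑ v, ‖consensusDev f v‖ ^ 2 ≤ ∑ i, ∑ v, f v i ^ 2 := by
        rw [sum_norm_consensusDev_sq]
        exact sum_le_sum fun i _ => consensusDist2_le_sum_sq _
    _ = ∑ v, ‖f v‖ ^ 2 := by
        simp only [EuclideanSpace.real_norm_sq_eq]
        exact sum_comm

lemma sum_norm_consensusDev_mixing_sq_le {M : Matrix V V ℝ} {C : ℝ}
    (hM : ∀ z, consensusDist2 (M *ᵥ z) ≤ C * consensusDist2 z) (f : V → EuclideanSpace ℝ ι) :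
    ∑ v, ‖consensusDev (mixing M f) v‖ ^ 2 ≤ C * ∑ v, ‖consensusDev f v‖ ^ 2 := by
  simp only [sum_norm_consensusDev_sq, mixing_apply_apply, mul_sum]
  exact sum_le_sum fun i _ => hM _

end Euclidean

section Iterates

variable {V E : Type*} [Fintype V] [DecidableEq V] [AddCommGroup E] [Module ℝ E]
  {W : ℕ → Matrix V V ℝ} {P : ℕ → ℕ → Matrix V V ℝ} {γ : ℝ} {g x : ℕ → V → E}

lemma eq_mixing_sub_sum_mixing (hP0 : ∀ m, P m m = 1) (hPs : ∀ m k, P m (k + 1) = W k * P m k)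
    (hrec : ∀ k, x (k + 1) = mixing (W k) (x k) - γ • g k) (k : ℕ) :
    x k = mixing (P 0 k) (x 0) - γ • ∑ m ∈ range k, mixing (P (m + 1) k) (g m) := by
  induction k with
  | zero => simp [hP0]
  | succ k ih =>
    rw [hrec, ih, sum_range_succ, hP0, mixing_one]
    simp only [map_sub, map_smul, map_sum, ← mixing_mul, ← hPs, smul_add]
    abel

lemma consensusDev_eq_sum_consensusDev_mixing (hP0 : ∀ m, P m m = 1)
    (hPs : ∀ m k, P m (k + 1) = W k * P m k) (hW : ∀ k, W k *ᵥ 1 = 1)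
    (hx0 : ∀ v w, x 0 v = x 0 w) (hrec : ∀ k, x (k + 1) = mixing (W k) (x k) - γ • g k)
    (k : ℕ) :
    consensusDev (x k) = -γ • ∑ m ∈ range k, consensusDev (mixing (P (m + 1) k) (g m)) := by
  rw [eq_mixing_sub_sum_mixing hP0 hPs hrec, map_sub,
    mixing_of_forall_eq (mulVec_one_of_eq_mul_succ hP0 hPs hW k.zero_le) hx0,
    consensusDev_of_forall_eq hx0, map_smul, map_sum, zero_sub, neg_smul]

end Iterates

theorem agraf_consensus_control_general {V : Type*} [Fintype V] [DecidableEq V] {d : ℕ}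
    (W : ℕ → Matrix V V ℝ) (P : ℕ → ℕ → Matrix V V ℝ)
    (hP0 : ∀ m, P m m = 1) (hPs : ∀ m k, P m (k + 1) = W k * P m k)
    (ρb : ℝ) (hρb0 : 0 < ρb) (hρb1 : ρb ≤ 1)
    (hones : ∀ k, (W k).mulVec (fun _ => (1 : ℝ)) = fun _ => 1)
    (hmix : ∀ m k, m ≤ k → ∀ z : V → ℝ,
      consensusDist2 ((P m k).mulVec z) ≤ 2 * (1 - ρb) ^ (2 * (k - m)) * consensusDist2 z)
    (γ B : ℝ)
    (I : ℕ → Finset V)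
    (g : ℕ → V → EuclideanSpace ℝ (Fin d))
    (hg0 : ∀ k v, v ∉ I k → g k v = 0)
    (hgB : ∀ k v, ‖g k v‖ ≤ B)
    (x : ℕ → V → EuclideanSpace ℝ (Fin d))
    (hx0 : ∀ v w, x 0 v = x 0 w)
    (hrec : ∀ k v, x (k + 1) v = (∑ w, W k v w • x k w) - γ • g k v)
    (K : ℕ) :
    ∑ k ∈ Finset.range K,
        (∑ v, ‖x k v - (Fintype.card V : ℝ)⁻¹ • ∑ w, x k w‖ ^ 2)
      ≤ 2 * γ ^ 2 * B ^ 2 / ρb ^ 2 * ∑ k ∈ Finset.range K, ((I k).card : ℝ) := by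
  have hq0 : 0 ≤ 1 - ρb := by linarith
  have hq1 : 1 - ρb < 1 := by linarith
  set c : ℕ → ℝ := fun m => 2 * B ^ 2 * (I m).card
  have hc (m : ℕ) : 0 ≤ c m := by positivity
  have hterm (k m : ℕ) (hm : m < k) :
      ∑ v, ‖consensusDev (mixing (P (m + 1) k) (g m)) v‖ ^ 2 ≤ ((1 - ρb) ^ (k - 1 - m)) ^ 2 * c m :=
    calc _ ≤ 2 * (1 - ρb) ^ (2 * (k - (m + 1))) * ∑ v, ‖consensusDev (g m) v‖ ^ 2 :=
          sum_norm_consensusDev_mixing_sq_le (hmix _ _ hm) _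
      _ ≤ 2 * (1 - ρb) ^ (2 * (k - (m + 1))) * (B ^ 2 * (I m).card) := by
          gcongr
          exact (sum_norm_consensusDev_sq_le _).trans
            (sum_norm_sq_le_of_support (hg0 m) (hgB m))
      _ = ((1 - ρb) ^ (k - 1 - m)) ^ 2 * c m := by
          rw [← pow_mul, show k - (m + 1) = k - 1 - m by omega]
          ring
  have hstep (k : ℕ) : ∑ v, ‖consensusDev (x k) v‖ ^ 2
      ≤ γ ^ 2 * (ρb⁻¹ * ∑ m ∈ range k, (1 - ρb) ^ (k - 1 - m) * c m) := by
    have hsum := sum_norm_sum_range_sq_le_of_geom hq0 hq1 hc _ (hterm k)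
    rw [sub_sub_cancel] at hsum
    rw [consensusDev_eq_sum_consensusDev_mixing hP0 hPs hones hx0 (fun k => funext (hrec k))]
    simp only [Pi.smul_apply, Finset.sum_apply, norm_smul, mul_pow, norm_neg, Real.norm_eq_abs,
      sq_abs, ← mul_sum]
    gcongr
  calc _ ≤ ∑ k ∈ range K, γ ^ 2 * (ρb⁻¹ * ∑ m ∈ range k, (1 - ρb) ^ (k - 1 - m) * c m) :=
        sum_le_sum fun k _ => hstep k
    _ ≤ γ ^ 2 * (ρb⁻¹ * (ρb⁻¹ * ∑ m ∈ range K, c m)) := by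
        simp only [← mul_sum]
        gcongr
        simpa only [sub_sub_cancel] using sum_range_sum_range_geom_mul_le hq0 hq1 hc K
    _ = 2 * γ ^ 2 * B ^ 2 / ρb ^ 2 * ∑ k ∈ Finset.range K, ((I k).card : ℝ) := by
        rw [← mul_sum]
        ring

/-- Consensus control for AGRAF SGD with bounded gradients: under the ergodic
mixing property, the iterates `x^{k+1} = W_k x^k − γ g^k` with `‖g^k_v‖ ≤ B`
(and `g^k_v = 0` for `v ∉ I_k`) satisfy
`∑_{k<K} ‖x^k − x̄^k‖² ≤ (2γ²B²/ρ̄²) ∑_{k<K} |I_k|`. -/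
theorem agraf_consensus_control {V : Type*} [Fintype V] [DecidableEq V] [Nonempty V] {d : ℕ}
    (W : ℕ → Matrix V V ℝ) (P : ℕ → ℕ → Matrix V V ℝ)
    (hP0 : ∀ m, P m m = 1) (hPs : ∀ m k, P m (k + 1) = W k * P m k)
    (ρb : ℝ) (hρb0 : 0 < ρb) (hρb1 : ρb ≤ 1)
    (hones : ∀ k, (W k).mulVec (fun _ => (1 : ℝ)) = fun _ => 1)
    (hmix : ∀ m k, m ≤ k → ∀ z : V → ℝ,
      consensusDist2 ((P m k).mulVec z) ≤ 2 * (1 - ρb) ^ (2 * (k - m)) * consensusDist2 z)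
    (γ B : ℝ) (hγ : 0 ≤ γ) (hB : 0 ≤ B)
    (I : ℕ → Finset V)
    (g : ℕ → V → EuclideanSpace ℝ (Fin d))
    (hg0 : ∀ k v, v ∉ I k → g k v = 0)
    (hgB : ∀ k v, ‖g k v‖ ≤ B)
    (x : ℕ → V → EuclideanSpace ℝ (Fin d))
    (hx0 : ∀ v w, x 0 v = x 0 w)
    (hrec : ∀ k v, x (k + 1) v = (∑ w, W k v w • x k w) - γ • g k v)
    (K : ℕ) :
    ∑ k ∈ Finset.range K,
        (∑ v, ‖x k v - (Fintype.card V : ℝ)⁻¹ • ∑ w, x k w‖ ^ 2)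
      ≤ 2 * γ ^ 2 * B ^ 2 / ρb ^ 2 * ∑ k ∈ Finset.range K, ((I k).card : ℝ) :=
  agraf_consensus_control_general W P hP0 hPs ρb hρb0 hρb1 hones hmix γ B I g hg0 hgB x hx0 hrec K
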